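/- arXiv:1810.06738 — 5 statements merged into one kernel-verified Lean document; each statement's English description precedes it below -/
import Mathlib

section
/- For all α > 0, σ ∈ (0,1), c > −σ, and every natural number n ≥ 1, the integral over (0,1) of μ · (1−μ)^(n−1) · f(μ) dμ equals α · Γ(1+c) · Γ(n+c+σ−1) / (Γ(n+c) · Γ(c+σ)), where f is the stable beta Lévy density. (This is the expected rate at which the n-th clique of the stable-beta Indian buffet process introduces new vertices.) -/
/-!
Multiplying the stable beta density by `μ (1 - μ)^(n-1)` leaves a constant times the
Beta`(1 - σ, n + c + σ - 1)` kernel, whose integral over `(0, 1)` is Euler's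
`Γ(1 - σ) Γ(n + c + σ - 1) / Γ(n + c)`; the factor `Γ(1 - σ)` then cancels against the
normalisation of the density.
-/

open Real MeasureTheory

noncomputable def stableBetaDensity (α σ c : ℝ) (μ : ℝ) : ℝ :=
  α * Real.Gamma (1 + c) / (Real.Gamma (1 - σ) * Real.Gamma (c + σ)) *
    μ ^ (-σ - 1) * (1 - μ) ^ (c + σ - 1)

theorem integral_rpow_mul_one_sub_rpow_eq_beta {a b : ℝ} (ha : 0 < a) (hb : 0 < b) :
    ∫ x in Set.Ioo (0 : ℝ) 1, x ^ (a - 1) * (1 - x) ^ (b - 1) = ProbabilityTheory.beta a b := by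
  apply Complex.ofReal_injective
  have hcpow : ∀ x ∈ Set.Ioo (0 : ℝ) 1, ((x ^ (a - 1) * (1 - x) ^ (b - 1) : ℝ) : ℂ)
      = (x : ℂ) ^ ((a : ℂ) - 1) * (1 - (x : ℂ)) ^ ((b : ℂ) - 1) := by
    intro x hx
    push_cast [Complex.ofReal_cpow hx.1.le, Complex.ofReal_cpow (sub_nonneg.2 hx.2.le)]
    rfl
  rw [← integral_complex_ofReal, setIntegral_congr_fun measurableSet_Ioo hcpow,
    ← integral_Ioc_eq_integral_Ioo, ← intervalIntegral.integral_of_le zero_le_one,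
    ← Complex.betaIntegral, Complex.betaIntegral_eq_Gamma_mul_div _ _ (by simpa) (by simpa),
    ProbabilityTheory.beta]
  push_cast [← Complex.Gamma_ofReal]
  rfl

theorem mul_one_sub_pow_mul_stableBetaDensity (α σ c : ℝ) (m : ℕ) {μ : ℝ}
    (hμ : μ ∈ Set.Ioo (0 : ℝ) 1) :
    μ * (1 - μ) ^ m * stableBetaDensity α σ c μ
      = α * Gamma (1 + c) / (Gamma (1 - σ) * Gamma (c + σ)) *
        (μ ^ ((1 - σ) - 1) * (1 - μ) ^ ((m + c + σ) - 1)) := by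
  rw [stableBetaDensity, show (1 - σ) - 1 = 1 + (-σ - 1) by ring, rpow_add hμ.1, rpow_one,
    show (m + c + σ) - 1 = m + (c + σ - 1) by ring, rpow_add (sub_pos.2 hμ.2), rpow_natCast]
  ring

theorem integral_newVertexRate_stableBetaDensity_general (α σ c : ℝ) (n : ℕ)
    (hσ : σ ∈ Set.Ioo (0 : ℝ) 1) (hc : -σ < c) (hn : 1 ≤ n) :
    ∫ μ in Set.Ioo (0 : ℝ) 1, μ * (1 - μ) ^ (n - 1) * stableBetaDensity α σ c μ
      = α * Real.Gamma (1 + c) * Real.Gamma ((n : ℝ) + c + σ - 1)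
          / (Real.Gamma ((n : ℝ) + c) * Real.Gamma (c + σ)) := by
  have hm : ((n - 1 : ℕ) : ℝ) + c + σ = n + c + σ - 1 := by push_cast [Nat.cast_sub hn]; ring
  have hσ' : 0 < 1 - σ := sub_pos.2 hσ.2
  have hb : 0 < (n : ℝ) + c + σ - 1 := by
    have : (1 : ℝ) ≤ n := by exact_mod_cast hn
    linarith
  rw [setIntegral_congr_fun measurableSet_Ioo
      fun μ hμ => mul_one_sub_pow_mul_stableBetaDensity α σ c (n - 1) hμ,
    integral_const_mul, hm, integral_rpow_mul_one_sub_rpow_eq_beta hσ' hb, ProbabilityTheory.beta,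
    show 1 - σ + (n + c + σ - 1) = (n : ℝ) + c by ring]
  have hΓ : Gamma (1 - σ) ≠ 0 := (Gamma_pos_of_pos hσ').ne'
  field_simp

/-- The expected rate at which the n-th clique introduces new
vertices: `∫_{(0,1)} μ·(1−μ)^(n−1) · f(μ) dμ = α·Γ(1+c)·Γ(n+c+σ−1)/(Γ(n+c)·Γ(c+σ))`. -/
theorem integral_newVertexRate_stableBetaDensity (α σ c : ℝ) (n : ℕ)
    (hα : 0 < α) (hσ : σ ∈ Set.Ioo (0 : ℝ) 1) (hc : -σ < c) (hn : 1 ≤ n) :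
    ∫ μ in Set.Ioo (0 : ℝ) 1, μ * (1 - μ) ^ (n - 1) * stableBetaDensity α σ c μ
      = α * Real.Gamma (1 + c) * Real.Gamma ((n : ℝ) + c + σ - 1)
          / (Real.Gamma ((n : ℝ) + c) * Real.Gamma (c + σ)) :=
  integral_newVertexRate_stableBetaDensity_general α σ c n hσ hc hn
end

section
/- For all α > 0, σ ∈ (0,1), and c > 0, the quantity (α · Γ(1+c) / Γ(c+σ)) · Σ_{n=1}^{N} Γ(n+c+σ−1)/Γ(n+c), divided by N^σ, converges to (α/σ) · Γ(c+1)/Γ(c+σ) as N → ∞, where Γ denotes the real Gamma function. (This is the analytic content of Proposition 1: the expected number of vertices in a random clique cover with N generating cliques grows as (α/σ)·Γ(c+1)/Γ(c+σ) · N^σ.) -/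
/-!
Log-convexity of `Γ` on `(0, ∞)` gives Wendel's inequalities
`x ^ (1 - s) (x + s) ^ (s - 1) ≤ Γ(x + s) / (Γ(x) x ^ s) ≤ 1` for `0 < s < 1`, so
`Γ(x + σ) / Γ(x) ~ x ^ σ`. The functional equation `Γ(x + 1) = x Γ(x)` makes
`σ Γ(x + σ) / Γ(x + 1)` the increment of `x ↦ Γ(x + σ) / Γ(x)`, so `σ` times the sum telescopes
to `Γ(N + c + σ) / Γ(N + c) - Γ(c + σ) / Γ(c) ~ N ^ σ`.
-/

open Real Filter Finset Topology

theorem Real.Gamma_add_le_Gamma_mul_rpow {x s : ℝ} (hx : 0 < x) (hs : s ∈ Set.Ioo (0 : ℝ) 1) :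
    Gamma (x + s) ≤ Gamma x * x ^ s := by
  obtain ⟨hs0, hs1⟩ := hs
  have hG : 0 < Gamma x := Gamma_pos_of_pos hx
  calc Gamma (x + s) = Gamma ((1 - s) * x + s * (x + 1)) := by ring_nf
    _ ≤ Gamma x ^ (1 - s) * Gamma (x + 1) ^ s :=
      Gamma_mul_add_mul_le_rpow_Gamma_mul_rpow_Gamma hx (by linarith) (by linarith) hs0 (by ring)
    _ = Gamma x * x ^ s := by
      rw [Gamma_add_one hx.ne', mul_rpow hx.le hG.le, mul_left_comm, ← rpow_add hG,
        sub_add_cancel, rpow_one, mul_comm (x ^ s)]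

theorem Real.mul_Gamma_le_Gamma_add_mul_rpow {x s : ℝ} (hx : 0 < x) (hs : s ∈ Set.Ioo (0 : ℝ) 1) :
    x * Gamma x ≤ Gamma (x + s) * (x + s) ^ (1 - s) := by
  obtain ⟨hs0, hs1⟩ := hs
  rw [← Gamma_add_one hx.ne', show x + 1 = x + s + (1 - s) by ring]
  exact Gamma_add_le_Gamma_mul_rpow (by linarith) ⟨by linarith, by linarith⟩

theorem tendsto_div_add_const_atTop (a : ℝ) : Tendsto (fun x : ℝ => x / (x + a)) atTop (𝓝 1) := by
  have h : Tendsto (fun x : ℝ => (1 + a * x⁻¹)⁻¹) atTop (𝓝 1) := by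
    simpa using ((tendsto_inv_atTop_zero.const_mul a).const_add 1).inv₀ (by simp)
  refine h.congr' ?_
  filter_upwards [eventually_gt_atTop 0] with x hx
  field_simp

theorem Real.tendsto_Gamma_add_div_Gamma_div_rpow {s : ℝ} (hs : s ∈ Set.Ioo (0 : ℝ) 1) :
    Tendsto (fun x => Gamma (x + s) / Gamma x / x ^ s) atTop (𝓝 1) := by
  have hlower : Tendsto (fun x : ℝ => (x / (x + s)) ^ (1 - s)) atTop (𝓝 1) := by
    simpa using (tendsto_div_add_const_atTop s).rpow_const (Or.inl one_ne_zero)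
  refine tendsto_of_tendsto_of_tendsto_of_le_of_le' hlower tendsto_const_nhds ?_ ?_
  · filter_upwards [eventually_gt_atTop 0] with x hx
    have hxs : 0 < x + s := by linarith [hs.1]
    have := mul_Gamma_le_Gamma_add_mul_rpow hx hs
    rw [div_rpow hx.le hxs.le, rpow_sub hx, rpow_one, div_div, div_div,
      div_le_div_iff₀ (by positivity) (by positivity)]
    linarith [mul_le_mul_of_nonneg_right this (rpow_nonneg hx.le s)]
  · filter_upwards [eventually_gt_atTop 0] with x hx
    rw [div_div, div_le_one (by positivity)]
    exact Gamma_add_le_Gamma_mul_rpow hx hs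

theorem Real.tendsto_Gamma_natCast_add_add_div_rpow (c : ℝ) {s : ℝ} (hs : s ∈ Set.Ioo (0 : ℝ) 1) :
    Tendsto (fun n : ℕ => Gamma (n + c + s) / Gamma (n + c) / (n : ℝ) ^ s) atTop (𝓝 1) := by
  have hratio := (tendsto_Gamma_add_div_Gamma_div_rpow hs).comp
    (tendsto_atTop_add_const_right _ c tendsto_natCast_atTop_atTop)
  have hpow : Tendsto (fun n : ℕ => ((n : ℝ) / (n + c)) ^ s) atTop (𝓝 1) := by
    simpa using (tendsto_natCast_div_add_atTop c).rpow_const (Or.inl one_ne_zero)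
  have h := hratio.div hpow one_ne_zero
  rw [div_one] at h
  refine h.congr' ?_
  filter_upwards [eventually_gt_atTop 0, (tendsto_atTop_add_const_right _ c
    tendsto_natCast_atTop_atTop).eventually_gt_atTop 0] with n hn hnc
  have hn' : (0 : ℝ) < n := Nat.cast_pos.mpr hn
  simp only [Pi.div_apply, Function.comp_apply]
  rw [div_rpow hn'.le hnc.le]
  field_simp

theorem Real.Gamma_add_one_add_div_Gamma_add_one_sub {x σ : ℝ} (hx : 0 < x) (hxσ : 0 < x + σ) :
    Gamma (x + 1 + σ) / Gamma (x + 1) - Gamma (x + σ) / Gamma x =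
      σ * (Gamma (x + σ) / Gamma (x + 1)) := by
  rw [add_right_comm, Gamma_add_one hxσ.ne', Gamma_add_one hx.ne']
  field_simp
  ring

theorem Real.mul_sum_Icc_Gamma_div_Gamma {σ c : ℝ} (hσ : 0 < σ) (hc : 0 < c) (N : ℕ) :
    σ * ∑ n ∈ Icc 1 N, Gamma ((n : ℝ) + c + σ - 1) / Gamma ((n : ℝ) + c)
      = Gamma (N + c + σ) / Gamma (N + c) - Gamma (c + σ) / Gamma c := by
  induction N with
  | zero => simp
  | succ N ih =>
    have hNc : 0 < (N : ℝ) + c := by positivity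
    have hstep := Gamma_add_one_add_div_Gamma_add_one_sub hNc (by positivity : 0 < (N : ℝ) + c + σ)
    rw [sum_Icc_succ_top (by omega), mul_add, ih, Nat.cast_succ,
      show (N : ℝ) + 1 + c = N + c + 1 by ring, show (N : ℝ) + c + 1 + σ - 1 = N + c + σ by ring]
    linarith

theorem Real.tendsto_sum_Icc_Gamma_div_Gamma_div_rpow {σ c : ℝ} (hσ : σ ∈ Set.Ioo (0 : ℝ) 1)
    (hc : 0 < c) :
    Tendsto (fun N : ℕ =>
        (∑ n ∈ Icc 1 N, Gamma ((n : ℝ) + c + σ - 1) / Gamma ((n : ℝ) + c)) / (N : ℝ) ^ σ)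
      atTop (𝓝 (1 / σ)) := by
  have hconst : Tendsto (fun N : ℕ => Gamma (c + σ) / Gamma c / (N : ℝ) ^ σ) atTop (𝓝 0) :=
    tendsto_const_nhds.div_atTop ((tendsto_rpow_atTop hσ.1).comp tendsto_natCast_atTop_atTop)
  have h := ((tendsto_Gamma_natCast_add_add_div_rpow c hσ).sub hconst).div_const σ
  rw [sub_zero] at h
  refine h.congr fun N => ?_
  rw [← sub_div, ← mul_sum_Icc_Gamma_div_Gamma hσ.1 hc N]
  field_simp [hσ.1.ne']

theorem expected_vertices_powerLaw_general (α σ c : ℝ)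
    (hσ : σ ∈ Set.Ioo (0 : ℝ) 1) (hc : 0 < c) :
    Tendsto (fun N : ℕ =>
        (α * Real.Gamma (1 + c) / Real.Gamma (c + σ)) *
          (∑ n ∈ Finset.Icc 1 N,
            Real.Gamma ((n : ℝ) + c + σ - 1) / Real.Gamma ((n : ℝ) + c))
          / (N : ℝ) ^ σ)
      atTop (nhds ((α / σ) * Real.Gamma (c + 1) / Real.Gamma (c + σ))) := by
  have h := (tendsto_sum_Icc_Gamma_div_Gamma_div_rpow hσ hc).const_mul
    (α * Gamma (1 + c) / Gamma (c + σ))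
  simp_rw [← mul_div_assoc] at h
  convert h using 2
  rw [add_comm c 1]
  ring

/-- Proposition 1, analytic content: the expected number of
vertices after N cliques, `(α·Γ(1+c)/Γ(c+σ)) · Σ_{n=1}^{N} Γ(n+c+σ−1)/Γ(n+c)`,
grows like `(α/σ)·Γ(c+1)/Γ(c+σ) · N^σ`. -/
theorem expected_vertices_powerLaw (α σ c : ℝ)
    (hα : 0 < α) (hσ : σ ∈ Set.Ioo (0 : ℝ) 1) (hc : 0 < c) :
    Tendsto (fun N : ℕ =>
        (α * Real.Gamma (1 + c) / Real.Gamma (c + σ)) *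
          (∑ n ∈ Finset.Icc 1 N,
            Real.Gamma ((n : ℝ) + c + σ - 1) / Real.Gamma ((n : ℝ) + c))
          / (N : ℝ) ^ σ)
      atTop (nhds ((α / σ) * Real.Gamma (c + 1) / Real.Gamma (c + σ))) :=
  expected_vertices_powerLaw_general α σ c hσ hc
end

section
/- Fix σ ∈ (0,1), c > −σ with c > −1, and a natural number j ≥ 1. Then the quantity C(N,j) · Γ(N−j+c+σ) / Γ(N+c), divided by N^σ, converges to 1/j! as N → ∞, where C(N,j) is the binomial coefficient and Γ the real Gamma function. (Consequently the expected number K_{N,j} of vertices appearing in exactly j of N cliques satisfies K_{N,j} / N^σ → α·Γ(j−σ)·Γ(1+c)/(j!·Γ(1−σ)·Γ(c+σ)), the Zipf law of Equation 2.) -/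
open Real Filter

/-! For `0 ≤ x ≤ 1`, log-convexity of `Γ` on the segments `[s, s + 1]` and `[s + x, s + x + 1]`
squeezes `Γ (n + x) / (Γ n * n ^ x)` between `(n / (n + x)) ^ (1 - x)` and `1`, which gives
Wendel's limit `Γ (n + x) ~ Γ n * n ^ x`; the recurrence `Γ (s + 1) = s * Γ s` extends it to every
real `x`. Together with `C(N, j) ~ N ^ j / j!`, the quotient in the theorem is then asymptotic to a
sequence that is eventually equal to `1 / j!`. -/

open Asymptotics Topology

namespace Real

theorem Gamma_mul_add_mul_le_rpow_Gamma_mul_rpow_Gamma_of_nonneg {s t a b : ℝ}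
    (hs : 0 < s) (ht : 0 < t) (ha : 0 ≤ a) (hb : 0 ≤ b) (hab : a + b = 1) :
    Gamma (a * s + b * t) ≤ Gamma s ^ a * Gamma t ^ b := by
  rcases ha.eq_or_lt with rfl | ha
  · obtain rfl : b = 1 := by linarith
    simp
  rcases hb.eq_or_lt with rfl | hb
  · obtain rfl : a = 1 := by linarith
    simp
  exact Gamma_mul_add_mul_le_rpow_Gamma_mul_rpow_Gamma hs ht ha hb hab

theorem Gamma_add_le_Gamma_mul_rpow_s7 {s x : ℝ} (hs : 0 < s) (hx0 : 0 ≤ x) (hx1 : x ≤ 1) :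
    Gamma (s + x) ≤ Gamma s * s ^ x := by
  have hΓ := Gamma_pos_of_pos hs
  calc Gamma (s + x) = Gamma ((1 - x) * s + x * (s + 1)) := by ring_nf
    _ ≤ Gamma s ^ (1 - x) * Gamma (s + 1) ^ x :=
      Gamma_mul_add_mul_le_rpow_Gamma_mul_rpow_Gamma_of_nonneg hs (by linarith) (by linarith)
        hx0 (by ring)
    _ = Gamma s * s ^ x := by
      rw [Gamma_add_one hs.ne', mul_rpow hs.le hΓ.le, mul_left_comm, ← rpow_add hΓ,
        sub_add_cancel, rpow_one, mul_comm]

theorem mul_Gamma_le_Gamma_add_mul_rpow_s7 {s x : ℝ} (hs : 0 < s) (hx0 : 0 ≤ x) (hx1 : x ≤ 1) :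
    s * Gamma s ≤ Gamma (s + x) * (s + x) ^ (1 - x) := by
  have hsx : 0 < s + x := by linarith
  have hΓ := Gamma_pos_of_pos hsx
  calc s * Gamma s = Gamma (x * (s + x) + (1 - x) * (s + x + 1)) := by
        rw [← Gamma_add_one hs.ne']; ring_nf
    _ ≤ Gamma (s + x) ^ x * Gamma (s + x + 1) ^ (1 - x) :=
      Gamma_mul_add_mul_le_rpow_Gamma_mul_rpow_Gamma_of_nonneg hsx (by linarith) hx0
        (by linarith) (by ring)
    _ = Gamma (s + x) * (s + x) ^ (1 - x) := by
      rw [Gamma_add_one hsx.ne', mul_rpow hsx.le hΓ.le, mul_left_comm, ← rpow_add hΓ,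
        add_sub_cancel, rpow_one, mul_comm]

theorem tendsto_Gamma_natCast_add_div_of_mem_Icc {x : ℝ} (hx0 : 0 ≤ x) (hx1 : x ≤ 1) :
    Tendsto (fun n : ℕ => Gamma (n + x) / (Gamma n * (n : ℝ) ^ x)) atTop (𝓝 1) := by
  have hlow : Tendsto (fun n : ℕ => ((n : ℝ) / (n + x)) ^ (1 - x)) atTop (𝓝 1) := by
    simpa using (tendsto_natCast_div_add_atTop x).rpow_const (Or.inl one_ne_zero)
  refine tendsto_of_tendsto_of_tendsto_of_le_of_le' hlow tendsto_const_nhds ?_ ?_ <;>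
    filter_upwards [eventually_gt_atTop 0] with n hn <;>
    have hn : (0 : ℝ) < n := by exact_mod_cast hn
  · have hnx : (0 : ℝ) < n + x := by linarith
    have hsplit : (n : ℝ) ^ (1 - x) * (Gamma n * (n : ℝ) ^ x) = n * Gamma n := by
      rw [mul_left_comm, ← rpow_add hn, sub_add_cancel, rpow_one, mul_comm]
    rw [le_div_iff₀ (by positivity), div_rpow hn.le hnx.le, div_mul_eq_mul_div, hsplit,
      div_le_iff₀ (by positivity)]
    exact mul_Gamma_le_Gamma_add_mul_rpow_s7 hn hx0 hx1
  · rw [div_le_one (by positivity)]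
    exact Gamma_add_le_Gamma_mul_rpow_s7 hn hx0 hx1

theorem isEquivalent_Gamma_natCast_add_of_mem_Icc {x : ℝ} (hx0 : 0 ≤ x) (hx1 : x ≤ 1) :
    (fun n : ℕ => Gamma (n + x)) ~[atTop] fun n => Gamma n * (n : ℝ) ^ x := by
  refine (isEquivalent_iff_tendsto_one ?_).2 (tendsto_Gamma_natCast_add_div_of_mem_Icc hx0 hx1)
  filter_upwards [eventually_gt_atTop 0] with n hn
  have hn : (0 : ℝ) < n := by exact_mod_cast hn
  positivity

theorem isEquivalent_Gamma_natCast_add_add_one_iff (x : ℝ) :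
    ((fun n : ℕ => Gamma (n + (x + 1))) ~[atTop] fun n => Gamma n * (n : ℝ) ^ (x + 1)) ↔
      (fun n : ℕ => Gamma (n + x)) ~[atTop] fun n => Gamma n * (n : ℝ) ^ x := by
  have hpos : ∀ᶠ n : ℕ in atTop, (0 : ℝ) < n ∧ (0 : ℝ) < n + x := by
    filter_upwards [eventually_gt_atTop 0,
      tendsto_natCast_atTop_atTop.eventually_gt_atTop (-x)] with n hn hnx
    exact ⟨by exact_mod_cast hn, by linarith⟩
  have hlin : (fun n : ℕ => (n : ℝ) + x) ~[atTop] fun n => (n : ℝ) := by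
    refine ((isEquivalent_iff_tendsto_one ?_).2 (tendsto_natCast_div_add_atTop x)).symm
    filter_upwards [hpos] with n hn
    exact hn.2.ne'
  have hrec : (fun n : ℕ => Gamma (n + (x + 1))) =ᶠ[atTop]
      (fun n : ℕ => (n : ℝ) + x) * fun n : ℕ => Gamma (n + x) := by
    filter_upwards [hpos] with n hn
    rw [Pi.mul_apply, ← add_assoc, Gamma_add_one hn.2.ne']
  have hpow : (fun n : ℕ => Gamma n * (n : ℝ) ^ (x + 1)) =ᶠ[atTop]
      (fun n : ℕ => (n : ℝ)) * fun n : ℕ => Gamma n * (n : ℝ) ^ x := by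
    filter_upwards [hpos] with n hn
    rw [Pi.mul_apply, rpow_add_one hn.1.ne']
    ring
  constructor
  · intro h
    refine ((h.congr_left hrec).congr_right hpow).div hlin |>.congr_left ?_ |>.congr_right ?_ <;>
      filter_upwards [hpos] with n hn <;>
      simp only [Pi.div_apply, Pi.mul_apply]
    · exact mul_div_cancel_left₀ _ hn.2.ne'
    · exact mul_div_cancel_left₀ _ hn.1.ne'
  · intro h
    exact ((hlin.mul h).congr_left hrec.symm).congr_right hpow.symm

theorem isEquivalent_Gamma_natCast_add (x : ℝ) :
    (fun n : ℕ => Gamma (n + x)) ~[atTop] fun n => Gamma n * (n : ℝ) ^ x := by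
  have hfract_add : ∀ m : ℤ, (fun n : ℕ => Gamma (n + (Int.fract x + m))) ~[atTop]
      fun n => Gamma n * (n : ℝ) ^ (Int.fract x + m) := by
    intro m
    induction m using Int.induction_on with
    | zero =>
      simpa using isEquivalent_Gamma_natCast_add_of_mem_Icc (Int.fract_nonneg x)
        (Int.fract_lt_one x).le
    | succ k ih =>
      push_cast
      rwa [← add_assoc, isEquivalent_Gamma_natCast_add_add_one_iff]
    | pred k ih =>
      rw [← isEquivalent_Gamma_natCast_add_add_one_iff]
      push_cast at ih ⊢
      rwa [add_assoc, sub_add_cancel]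
  simpa using hfract_add ⌊x⌋

end Real

theorem choose_mul_gammaRatio_tendsto_general (σ c : ℝ) (j : ℕ) :
    Tendsto (fun N : ℕ =>
        (N.choose j : ℝ) * Real.Gamma ((N : ℝ) - (j : ℝ) + c + σ)
          / Real.Gamma ((N : ℝ) + c) / (N : ℝ) ^ σ)
      atTop (nhds (1 / (Nat.factorial j : ℝ))) := by
  have hnum : (fun N : ℕ => Gamma ((N : ℝ) - j + c + σ)) ~[atTop]
      fun N => Gamma N * (N : ℝ) ^ (c + σ - j) :=
    (isEquivalent_Gamma_natCast_add _).congr_left (.of_forall fun N => by ring_nf)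
  have hequiv := (((isEquivalent_choose j).mul hnum).div
    (isEquivalent_Gamma_natCast_add c)).div (IsEquivalent.refl (u := fun N : ℕ => (N : ℝ) ^ σ))
  refine hequiv.symm.tendsto_nhds (tendsto_const_nhds.congr' ?_)
  filter_upwards [eventually_gt_atTop 0] with N hN
  have hN : (0 : ℝ) < N := by exact_mod_cast hN
  simp only [Pi.div_apply, Pi.mul_apply]
  rw [rpow_sub hN, rpow_add hN, rpow_natCast]
  field_simp

/-- Zipf law asymptotics: for fixed `j ≥ 1`,
`C(N,j)·Γ(N−j+c+σ)/Γ(N+c) / N^σ → 1/j!` as `N → ∞`. -/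
theorem choose_mul_gammaRatio_tendsto (σ c : ℝ) (j : ℕ)
    (hσ : σ ∈ Set.Ioo (0 : ℝ) 1) (hc : -σ < c) (hc1 : -1 < c) (hj : 1 ≤ j) :
    Tendsto (fun N : ℕ =>
        (N.choose j : ℝ) * Real.Gamma ((N : ℝ) - (j : ℝ) + c + σ)
          / Real.Gamma ((N : ℝ) + c) / (N : ℝ) ^ σ)
      atTop (nhds (1 / (Nat.factorial j : ℝ))) :=
  choose_mul_gammaRatio_tendsto_general σ c j
end

section
/- For all α > 0, σ ∈ (0,1), and c > −σ, the function mapping the natural number N to the double integral over (0,1)×(0,1) of (1 − (1 − w·v)^N) · f(w) · f(v) dw dv is O(min(N^((1+σ)/2), N^((3σ)/2))) as N → ∞, where f is the stable beta Lévy density. (This is the analytic content of Proposition 2: twice the expected number of edges in a random clique cover with N generating cliques grows as O(min(N^((1+σ)/2), N^((3σ)/2))).) -/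
set_option maxHeartbeats 1000000

open Real MeasureTheory Filter Asymptotics

/-- Integrability of the beta integrand. -/
lemma integrableOn_beta {p q : ℝ} (hp : -1 < p) (hq : -1 < q) :
    IntegrableOn (fun x : ℝ => x ^ p * (1 - x) ^ q) (Set.Ioo (0 : ℝ) 1) := by
  have h2 : (0:ℝ) < 1/2 := by norm_num
  -- left piece
  have hL : IntegrableOn (fun x : ℝ => x ^ p * (1 - x) ^ q) (Set.Ioc (0:ℝ) (1/2)) := by
    have hint : IntegrableOn (fun x : ℝ => x ^ p) (Set.Ioc (0:ℝ) (1/2)) :=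
      (intervalIntegrable_iff_integrableOn_Ioc_of_le (by norm_num)).mp
        (intervalIntegral.intervalIntegrable_rpow' hp)
    have hint2 : IntegrableOn (fun x : ℝ => ((1/2:ℝ) ^ q + 1) * x ^ p) (Set.Ioc (0:ℝ) (1/2)) :=
      hint.const_mul _
    refine hint2.mono' ?_ ?_
    · exact ((by fun_prop : Measurable (fun x : ℝ => x ^ p * (1 - x) ^ q))).aestronglyMeasurable
    · rw [ae_restrict_iff' measurableSet_Ioc]
      filter_upwards with x hx
      have hx0 : 0 < x := hx.1
      have hx1 : (1:ℝ)/2 ≤ 1 - x := by linarith [hx.2]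
      have h1x : 0 < 1 - x := by linarith
      rw [Real.norm_eq_abs, abs_mul, abs_of_nonneg (Real.rpow_nonneg hx0.le _),
        abs_of_nonneg (Real.rpow_nonneg h1x.le _)]
      have hbd : (1 - x) ^ q ≤ (1/2:ℝ) ^ q + 1 := by
        rcases le_or_gt q 0 with hq0 | hq0
        · have := Real.rpow_le_rpow_of_nonpos h2 hx1 hq0
          linarith
        · have : (1 - x) ^ q ≤ (1:ℝ) ^ q :=
            Real.rpow_le_rpow h1x.le (by linarith) hq0.le
          rw [Real.one_rpow] at this
          have : (0:ℝ) ≤ (1/2:ℝ) ^ q := Real.rpow_nonneg (by norm_num) _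
          nlinarith [Real.rpow_le_rpow h1x.le (show (1:ℝ)-x ≤ 1 by linarith) hq0.le,
            Real.one_rpow q]
      calc x ^ p * (1 - x) ^ q ≤ x ^ p * ((1/2:ℝ) ^ q + 1) :=
            mul_le_mul_of_nonneg_left hbd (Real.rpow_nonneg hx0.le _)
        _ = ((1/2:ℝ) ^ q + 1) * x ^ p := by ring
  -- right piece
  have hR : IntegrableOn (fun x : ℝ => x ^ p * (1 - x) ^ q) (Set.Ioc (1/2:ℝ) 1) := by
    have hint : IntervalIntegrable (fun x : ℝ => (1 - x) ^ q) volume 1 (1/2) := by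
      have := (intervalIntegral.intervalIntegrable_rpow' hq (a := 0) (b := 1/2)).comp_sub_left 1
      norm_num at this
      exact this
    have hint' : IntegrableOn (fun x : ℝ => (1 - x) ^ q) (Set.Ioc (1/2:ℝ) 1) :=
      (intervalIntegrable_iff_integrableOn_Ioc_of_le (by norm_num : (1:ℝ)/2 ≤ 1)).mp hint.symm
    have hint2 : IntegrableOn (fun x : ℝ => ((1/2:ℝ) ^ p + 1) * (1 - x) ^ q)
        (Set.Ioc (1/2:ℝ) 1) := hint'.const_mul _
    refine hint2.mono' ?_ ?_
    · exact ((by fun_prop : Measurable (fun x : ℝ => x ^ p * (1 - x) ^ q))).aestronglyMeasurable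
    · rw [ae_restrict_iff' measurableSet_Ioc]
      filter_upwards with x hx
      have hx0 : (1:ℝ)/2 < x := hx.1
      have h1x : 0 ≤ 1 - x := by linarith [hx.2]
      rw [Real.norm_eq_abs, abs_mul, abs_of_nonneg (Real.rpow_nonneg (by linarith) _),
        abs_of_nonneg (Real.rpow_nonneg h1x _)]
      have hbd : x ^ p ≤ (1/2:ℝ) ^ p + 1 := by
        rcases le_or_gt p 0 with hp0 | hp0
        · have := Real.rpow_le_rpow_of_nonpos h2 hx0.le hp0
          linarith
        · have h1 : x ^ p ≤ (1:ℝ) ^ p := Real.rpow_le_rpow (by linarith) hx.2 hp0.le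
          have h0 : (0:ℝ) ≤ (1/2:ℝ) ^ p := Real.rpow_nonneg (by norm_num) _
          rw [Real.one_rpow] at h1
          linarith
      exact mul_le_mul_of_nonneg_right hbd (Real.rpow_nonneg h1x _)
  have : Set.Ioo (0:ℝ) 1 ⊆ Set.Ioc (0:ℝ) (1/2) ∪ Set.Ioc (1/2:ℝ) 1 := by
    intro x hx
    rcases le_or_gt x (1/2) with h | h
    · exact Or.inl ⟨hx.1, h⟩
    · exact Or.inr ⟨h, hx.2.le⟩
  exact (hL.union hR).mono_set this

/-- Key pointwise estimate. -/
lemma key_pointwise {x e : ℝ} (hx : x ∈ Set.Ioo (0:ℝ) 1) (he0 : 0 < e) (he1 : e ≤ 1)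
    (N : ℕ) : 1 - (1 - x) ^ N ≤ ((N : ℝ) * x) ^ e := by
  obtain ⟨hx0, hx1⟩ := hx
  rcases Nat.eq_zero_or_pos N with rfl | hN
  · simp [Real.zero_rpow (ne_of_gt he0)]
  rcases le_or_gt ((N:ℝ) * x) 1 with h | h
  · have hb : 1 + (N:ℝ) * (-x) ≤ (1 + (-x)) ^ N := one_add_mul_le_pow (by linarith) N
    have h1 : 1 - (1 - x) ^ N ≤ (N:ℝ) * x := by
      have : (1:ℝ) - (N:ℝ) * x ≤ (1 - x) ^ N := by
        simpa [sub_eq_add_neg, mul_neg] using hb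
      linarith
    have h2 : ((N:ℝ) * x) ^ (1:ℝ) ≤ ((N:ℝ) * x) ^ e := by
      apply Real.rpow_le_rpow_of_exponent_ge (by positivity) h he1
    rw [Real.rpow_one] at h2
    linarith
  · have h1 : 1 - (1 - x) ^ N ≤ 1 := by
      have : (0:ℝ) ≤ (1 - x) ^ N := pow_nonneg (by linarith) N
      linarith
    have h2 : (1:ℝ) ≤ ((N:ℝ) * x) ^ e := Real.one_le_rpow h.le he0.le
    linarith

/-- Proposition 2, analytic content: the double integral
`∬_{(0,1)²} (1 − (1 − w·v)^N) f(w) f(v) dw dv` (twice the expected number of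
edges after N cliques) is `O(min(N^((1+σ)/2), N^((3σ)/2)))` as `N → ∞`. -/
theorem expected_edges_bigO (α σ c : ℝ)
    (hα : 0 < α) (hσ : σ ∈ Set.Ioo (0 : ℝ) 1) (hc : -σ < c) :
    (fun N : ℕ =>
        ∫ w in Set.Ioo (0 : ℝ) 1, ∫ v in Set.Ioo (0 : ℝ) 1,
          (1 - (1 - w * v) ^ N) * stableBetaDensity α σ c w * stableBetaDensity α σ c v)
      =O[atTop]
        (fun N : ℕ => min ((N : ℝ) ^ ((1 + σ) / 2)) ((N : ℝ) ^ (3 * σ / 2))) := by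
  obtain ⟨hσ0, hσ1⟩ := hσ
  set e := min ((1 + σ) / 2) (3 * σ / 2) with he_def
  have he0 : 0 < e := lt_min (by linarith) (by linarith)
  have he1 : e ≤ 1 := le_trans (min_le_left _ _) (by linarith)
  have heσ : σ < e := lt_min (by linarith) (by linarith)
  set K := α * Real.Gamma (1 + c) / (Real.Gamma (1 - σ) * Real.Gamma (c + σ)) with hK_def
  have hK0 : 0 ≤ K := by
    apply div_nonneg
    · exact mul_nonneg hα.le (Real.Gamma_pos_of_pos (by linarith)).le
    · exact mul_nonneg (Real.Gamma_pos_of_pos (by linarith)).le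
        (Real.Gamma_pos_of_pos (by linarith)).le
  -- nonnegativity of density on (0,1)
  have hf_nonneg : ∀ v ∈ Set.Ioo (0:ℝ) 1, 0 ≤ stableBetaDensity α σ c v := by
    intro v hv
    unfold stableBetaDensity
    exact mul_nonneg (mul_nonneg hK0 (Real.rpow_nonneg hv.1.le _))
      (Real.rpow_nonneg (by linarith [hv.2]) _)
  -- g is integrable
  set g : ℝ → ℝ := fun v => v ^ e * stableBetaDensity α σ c v with hg_def
  have hg_eq : ∀ v ∈ Set.Ioo (0:ℝ) 1,
      g v = K * (v ^ (e - σ - 1) * (1 - v) ^ (c + σ - 1)) := by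
    intro v hv
    simp only [hg_def, stableBetaDensity, ← hK_def]
    rw [show v ^ e * (K * v ^ (-σ - 1) * (1 - v) ^ (c + σ - 1)) =
      K * ((v ^ e * v ^ (-σ - 1)) * (1 - v) ^ (c + σ - 1)) by ring,
      ← Real.rpow_add hv.1]
    ring_nf
  have hg_int : IntegrableOn g (Set.Ioo (0:ℝ) 1) := by
    have := (integrableOn_beta (p := e - σ - 1) (q := c + σ - 1)
      (by linarith) (by linarith)).const_mul K
    exact IntegrableOn.congr_fun this (fun v hv => (hg_eq v hv).symm) measurableSet_Ioo
  have hg_nonneg : ∀ v ∈ Set.Ioo (0:ℝ) 1, 0 ≤ g v := fun v hv =>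
    mul_nonneg (Real.rpow_nonneg hv.1.le _) (hf_nonneg v hv)
  set C := ∫ v in Set.Ioo (0:ℝ) 1, g v with hC_def
  have hC0 : 0 ≤ C := setIntegral_nonneg measurableSet_Ioo hg_nonneg
  -- inner bound
  have inner_bound : ∀ (N : ℕ), ∀ w ∈ Set.Ioo (0:ℝ) 1,
      ‖∫ v in Set.Ioo (0:ℝ) 1,
          (1 - (1 - w * v) ^ N) * stableBetaDensity α σ c w * stableBetaDensity α σ c v‖
        ≤ (N:ℝ) ^ e * C * g w := by
    intro N w hw
    have hb : ∀ᵐ (v : ℝ) ∂(volume.restrict (Set.Ioo (0:ℝ) 1)),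
        ‖(1 - (1 - w * v) ^ N) * stableBetaDensity α σ c w * stableBetaDensity α σ c v‖
          ≤ ((N:ℝ) ^ e * g w) * g v := by
      rw [ae_restrict_iff' measurableSet_Ioo]
      filter_upwards with v hv
      have hwv : w * v ∈ Set.Ioo (0:ℝ) 1 := by
        constructor
        · exact mul_pos hw.1 hv.1
        · nlinarith [hw.1, hw.2, hv.1, hv.2]
      have hpt := key_pointwise hwv he0 he1 N
      have h0 : 0 ≤ 1 - (1 - w * v) ^ N := by
        have h1 : (1 - w * v) ^ N ≤ 1 :=
          pow_le_one₀ (by linarith [hwv.2]) (by linarith [hwv.1])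
        linarith
      rw [Real.norm_eq_abs, abs_of_nonneg (mul_nonneg (mul_nonneg h0
        (hf_nonneg w hw)) (hf_nonneg v hv))]
      have hrw : ((N:ℝ) * (w * v)) ^ e = (N:ℝ) ^ e * w ^ e * v ^ e := by
        rw [Real.mul_rpow (Nat.cast_nonneg N) (mul_nonneg hw.1.le hv.1.le),
          Real.mul_rpow hw.1.le hv.1.le]
        ring
      calc (1 - (1 - w * v) ^ N) * stableBetaDensity α σ c w * stableBetaDensity α σ c v
          ≤ ((N:ℝ) * (w * v)) ^ e * stableBetaDensity α σ c w * stableBetaDensity α σ c v := by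
            apply mul_le_mul_of_nonneg_right _ (hf_nonneg v hv)
            exact mul_le_mul_of_nonneg_right hpt (hf_nonneg w hw)
        _ = ((N:ℝ) ^ e * g w) * g v := by rw [hrw]; simp only [hg_def]; ring
    calc ‖∫ v in Set.Ioo (0:ℝ) 1,
          (1 - (1 - w * v) ^ N) * stableBetaDensity α σ c w * stableBetaDensity α σ c v‖
        ≤ ∫ v in Set.Ioo (0:ℝ) 1, ((N:ℝ) ^ e * g w) * g v :=
          norm_integral_le_of_norm_le (hg_int.const_mul _) hb
      _ = ((N:ℝ) ^ e * g w) * C := by rw [integral_const_mul _ _]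
      _ = (N:ℝ) ^ e * C * g w := by ring
  -- outer bound
  have outer_bound : ∀ (N : ℕ),
      ‖∫ w in Set.Ioo (0:ℝ) 1, ∫ v in Set.Ioo (0:ℝ) 1,
          (1 - (1 - w * v) ^ N) * stableBetaDensity α σ c w * stableBetaDensity α σ c v‖
        ≤ (N:ℝ) ^ e * (C * C) := by
    intro N
    have hb : ∀ᵐ (w : ℝ) ∂(volume.restrict (Set.Ioo (0:ℝ) 1)),
        ‖∫ v in Set.Ioo (0:ℝ) 1,
          (1 - (1 - w * v) ^ N) * stableBetaDensity α σ c w * stableBetaDensity α σ c v‖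
          ≤ ((N:ℝ) ^ e * C) * g w := by
      rw [ae_restrict_iff' measurableSet_Ioo]
      filter_upwards with w hw
      simpa [mul_assoc] using inner_bound N w hw
    calc ‖∫ w in Set.Ioo (0:ℝ) 1, ∫ v in Set.Ioo (0:ℝ) 1,
          (1 - (1 - w * v) ^ N) * stableBetaDensity α σ c w * stableBetaDensity α σ c v‖
        ≤ ∫ w in Set.Ioo (0:ℝ) 1, ((N:ℝ) ^ e * C) * g w :=
          norm_integral_le_of_norm_le (hg_int.const_mul _) hb
      _ = ((N:ℝ) ^ e * C) * C := by rw [integral_const_mul _ _]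
      _ = (N:ℝ) ^ e * (C * C) := by ring
  -- conclude
  rw [isBigO_iff]
  refine ⟨C * C, ?_⟩
  filter_upwards [eventually_ge_atTop 1] with N hN
  have hN1 : (1:ℝ) ≤ (N:ℝ) := by exact_mod_cast hN
  have hmono : Monotone (fun t : ℝ => (N:ℝ) ^ t) := fun a b hab =>
    Real.rpow_le_rpow_of_exponent_le hN1 hab
  have hmin : (N:ℝ) ^ e = min ((N:ℝ) ^ ((1 + σ) / 2)) ((N:ℝ) ^ (3 * σ / 2)) := by
    rw [he_def]
    exact hmono.map_min
  have hrhs : ‖min ((N:ℝ) ^ ((1 + σ) / 2)) ((N:ℝ) ^ (3 * σ / 2))‖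
      = min ((N:ℝ) ^ ((1 + σ) / 2)) ((N:ℝ) ^ (3 * σ / 2)) := by
    rw [Real.norm_eq_abs, abs_of_nonneg]
    exact le_min (Real.rpow_nonneg (by linarith) _) (Real.rpow_nonneg (by linarith) _)
  rw [hrhs, ← hmin]
  calc ‖∫ w in Set.Ioo (0:ℝ) 1, ∫ v in Set.Ioo (0:ℝ) 1,
          (1 - (1 - w * v) ^ N) * stableBetaDensity α σ c w * stableBetaDensity α σ c v‖
      ≤ (N:ℝ) ^ e * (C * C) := outer_bound N
    _ = C * C * (N:ℝ) ^ e := by ring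
end

section
/- Let σ ∈ (0,1], C > 0, let v : ℕ → ℝ be a sequence of positive reals with v(N)/N^σ → C as N → ∞, and let e : ℕ → ℝ be a sequence with e(N) = O(min(N^((1+σ)/2), N^((3σ)/2))) as N → ∞. Then e(N) = O((v(N))^γ) as N → ∞, where γ = min((1+σ)/(2σ), 3/2); moreover γ < 2. (This is the Corollary to Propositions 1 and 2: the number of edges grows sub-quadratically in the number of vertices, so the graph is sparse for all values of σ.) -/
open Real Filter Asymptotics

/-! If `v(N) ~ C N^σ` then `N^σ = O(v(N))`, hence `N^(σγ) = O(v(N)^γ)`; and since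
`N ≥ 1`, the bound `min(N^((1+σ)/2), N^(3σ/2))` is exactly `N^(σγ)`. -/

lemma eventually_nonneg_of_tendsto_div {α : Type*} {l : Filter α} {f g : α → ℝ} {C : ℝ}
    (hC : 0 < C) (hg : 0 ≤ᶠ[l] g) (h : Tendsto (fun x => f x / g x) l (nhds C)) :
    0 ≤ᶠ[l] f := by
  filter_upwards [h.eventually (eventually_gt_nhds hC), hg] with x hfg hgx
  exact le_of_not_gt fun hf => (div_nonpos_of_nonpos_of_nonneg hf.le hgx).not_gt hfg

lemma isBigO_rpow_of_tendsto_div {α : Type*} {l : Filter α} {f g : α → ℝ} {C r : ℝ}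
    (hC : 0 < C) (hg : 0 ≤ᶠ[l] g) (h : Tendsto (fun x => f x / g x) l (nhds C)) (hr : 0 ≤ r) :
    (fun x => g x ^ r) =O[l] fun x => f x ^ r :=
  (isBigO_of_div_tendsto_nhds_of_ne_zero h hC.ne').rpow hr
    (eventually_nonneg_of_tendsto_div hC hg h)

lemma min_rpow_rpow_of_one_le {x : ℝ} (hx : 1 ≤ x) (a b : ℝ) :
    min (x ^ a) (x ^ b) = x ^ min a b :=
  ((monotone_rpow_of_base_ge_one hx).map_min).symm

lemma mul_min_one_add_div_eq {σ : ℝ} (hσ : 0 < σ) :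
    σ * min ((1 + σ) / (2 * σ)) (3 / 2) = min ((1 + σ) / 2) (3 * σ / 2) := by
  rw [mul_min_of_nonneg _ _ hσ.le]
  congr 1
  · field_simp
  · ring

theorem graph_sparse_subquadratic_general (σ C : ℝ) (v e : ℕ → ℝ)
    (hσ : σ ∈ Set.Ioc (0 : ℝ) 1) (hC : 0 < C)
    (hvC : Tendsto (fun N : ℕ => v N / (N : ℝ) ^ σ) atTop (nhds C))
    (he : e =O[atTop]
      (fun N : ℕ => min ((N : ℝ) ^ ((1 + σ) / 2)) ((N : ℝ) ^ (3 * σ / 2)))) :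
    (e =O[atTop] (fun N : ℕ => v N ^ min ((1 + σ) / (2 * σ)) (3 / 2))) ∧
    min ((1 + σ) / (2 * σ)) (3 / 2) < 2 := by
  refine ⟨?_, min_lt_of_right_lt (by norm_num)⟩
  have hγ : 0 ≤ min ((1 + σ) / (2 * σ)) (3 / 2) := le_min (by have := hσ.1; positivity) (by norm_num)
  have hpow := isBigO_rpow_of_tendsto_div hC
    (Eventually.of_forall fun N : ℕ => rpow_nonneg (Nat.cast_nonneg N) σ) hvC hγ
  refine he.trans (EventuallyEq.trans_isBigO ?_ hpow)
  filter_upwards [eventually_ge_atTop 1] with N hN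
  rw [← rpow_mul (Nat.cast_nonneg N), mul_min_one_add_div_eq hσ.1,
    min_rpow_rpow_of_one_le (by exact_mod_cast hN)]

/-- Corollary: sparsity for all σ: if the number of vertices
grows as `v(N) ~ C·N^σ` and the number of edges satisfies
`e(N) = O(min(N^((1+σ)/2), N^((3σ)/2)))`, then `e(N) = O(v(N)^γ)` with
`γ = min((1+σ)/(2σ), 3/2) < 2`, so the graph is sparse. -/
theorem graph_sparse_subquadratic (σ C : ℝ) (v e : ℕ → ℝ)
    (hσ : σ ∈ Set.Ioc (0 : ℝ) 1) (hC : 0 < C) (hv : ∀ N, 0 < v N)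
    (hvC : Tendsto (fun N : ℕ => v N / (N : ℝ) ^ σ) atTop (nhds C))
    (he : e =O[atTop]
      (fun N : ℕ => min ((N : ℝ) ^ ((1 + σ) / 2)) ((N : ℝ) ^ (3 * σ / 2)))) :
    (e =O[atTop] (fun N : ℕ => v N ^ min ((1 + σ) / (2 * σ)) (3 / 2))) ∧
    min ((1 + σ) / (2 * σ)) (3 / 2) < 2 :=
  graph_sparse_subquadratic_general σ C v e hσ hC hvC he
end
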